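/- An 𝒮-linear operator L : 𝒮'(ℝⁿ) → 𝒮'(ℝᵐ) is weak* continuous: if a net (or filter) uᵢ → u in 𝒮'(ℝⁿ) with the weak* topology (i.e., uᵢ(φ) → u(φ) for every φ ∈ 𝒮(ℝⁿ)), then L(uᵢ)(ψ) → L(u)(ψ) for every ψ ∈ 𝒮(ℝᵐ). -/

import Mathlib

/-!
Apply `𝒮`-linearity to the Dirac family `p ↦ δ_p`, whose associated operator is the identity
of `𝒮(ℝⁿ)`: every `w` is the superposition `w ∘ id` of the Dirac masses, so `L w = w ∘ B` with
`B = (L ∘ δ)̂`. Composition with a fixed `B` is weak* continuous.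
-/

open SchwartzMap

/-- The Schwartz test function space `𝒮(ℝⁿ)`. -/
abbrev TestF (n : ℕ) := SchwartzMap (EuclideanSpace ℝ (Fin n)) ℝ

/-- The space of tempered distributions `𝒮'(ℝⁿ)`. -/
abbrev TempDist (n : ℕ) := TestF n →L[ℝ] ℝ

/-- An operator `L : 𝒮'(ℝⁿ) → 𝒮'(ℝᵐ)` (a priori just a function) is `𝒮`-linear
if for every `k` and every Schwartz family `v : ℝᵏ → 𝒮'(ℝⁿ)` with associated
operator `vh` (`vh φ p = v p φ`), the image family `L ∘ v` is again a Schwartz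
family — i.e. it has an associated operator `Lvh` with `Lvh ψ p = L (v p) ψ` —
and for every coefficient distribution `a ∈ 𝒮'(ℝᵏ)` the superposition identity
`L (a ∘ v̂) = a ∘ (L∘v)̂` holds. -/
def IsSLinear {n m : ℕ} (L : TempDist n → TempDist m) : Prop :=
  ∀ (k : ℕ) (v : EuclideanSpace ℝ (Fin k) → TempDist n)
    (vh : TestF n →L[ℝ] TestF k), (∀ (φ : TestF n) p, vh φ p = v p φ) →
    ∃ Lvh : TestF m →L[ℝ] TestF k,
      (∀ (ψ : TestF m) p, Lvh ψ p = L (v p) ψ) ∧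
      ∀ a : TempDist k, L (a.comp vh) = a.comp Lvh

noncomputable def dirac {n : ℕ} (p : EuclideanSpace ℝ (Fin n)) : TempDist n :=
  (BoundedContinuousFunction.evalCLM ℝ p).comp (toBoundedContinuousFunctionCLM ℝ _ ℝ)

theorem IsSLinear.exists_eq_comp {n m : ℕ} {L : TempDist n → TempDist m} (hL : IsSLinear L) :
    ∃ B : TestF m →L[ℝ] TestF n, ∀ w : TempDist n, L w = w.comp B := by
  obtain ⟨B, -, hLB⟩ := hL n dirac (ContinuousLinearMap.id ℝ _) fun _ _ => rfl
  exact ⟨B, fun w => by simpa only [ContinuousLinearMap.comp_id] using hLB w⟩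

/-- An 𝒮-linear operator is weak* continuous: if `uᵢ → u` in the weak* topology
of `𝒮'(ℝⁿ)` (pointwise on test functions) along a filter, then
`L(uᵢ)(ψ) → L(u)(ψ)` for every `ψ ∈ 𝒮(ℝᵐ)`. -/
theorem isSLinear_weakStar_continuous {n m : ℕ} (L : TempDist n → TempDist m)
    (hL : IsSLinear L) {ι : Type*} (F : Filter ι)
    (u : ι → TempDist n) (u₀ : TempDist n)
    (hconv : ∀ φ : TestF n, Filter.Tendsto (fun i => u i φ) F (nhds (u₀ φ))) :
    ∀ ψ : TestF m, Filter.Tendsto (fun i => L (u i) ψ) F (nhds (L u₀ ψ)) := by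
  obtain ⟨B, hB⟩ := hL.exists_eq_comp
  intro ψ
  simpa only [hB, ContinuousLinearMap.comp_apply] using hconv (B ψ)
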